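/- Assume (A1), (A2) and (A3). Then 𝟙 is the unique nonnegative nonzero vector u ∈ ℝ^N solving the algebraic system M u + u = u ∘ (C u), where ∘ denotes the componentwise (Hadamard) product. -/

import Mathlib

/-!
Irreducibility makes `u` positive. Since `M` has zero row and column sums,
`∑ᵢ (M u)ᵢ / uᵢ = ∑ᵢⱼ Mᵢⱼ (t - 1 - log t) ≥ 0` with `t = uⱼ / uᵢ`. A normal matrix with `C 𝟙 = 𝟙`
also has `Cᵀ 𝟙 = 𝟙`, so dividing the equation by `u` and summing gives
`∑ᵢ (M u)ᵢ / uᵢ = ∑ uᵢ - N`, while summing the equation itself gives `uᵀ C u = ∑ uᵢ`. The quadratic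
form of `C` is nonnegative because its symmetric part has spectrum `Re (spectrum C)`, so
`0 ≤ (u - 𝟙)ᵀ C (u - 𝟙) = N - ∑ uᵢ`. Hence `t = 1` along every nonzero entry of `M`, `u` is
constant by irreducibility, and the equation forces the constant to be `1`.
-/

open Matrix

/-- Irreducibility of a matrix: there is no nonempty proper subset `S` of indices with
`M i j = 0` for all `i ∈ S`, `j ∉ S`. -/
def MatrixIrreducible {N : ℕ} (M : Matrix (Fin N) (Fin N) ℝ) : Prop :=
  ∀ S : Finset (Fin N), S.Nonempty → S ≠ Finset.univ → ∃ i ∈ S, ∃ j ∉ S, M i j ≠ 0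

open ComplexStarModule
open scoped Matrix.Norms.L2Operator ComplexOrder

theorem Matrix.posSemidef_realPart {n : Type*} [Fintype n] [DecidableEq n] (A : Matrix n n ℂ)
    [IsStarNormal A] (h : ∀ μ ∈ spectrum ℂ A, 0 ≤ μ.re) : (ℜ A : Matrix n n ℂ).PosSemidef := by
  rw [posSemidef_iff_isHermitian_and_spectrum_nonneg, spectrum_realPart A]
  refine ⟨(ℜ A).2, ?_⟩
  rintro _ ⟨μ, hμ, rfl⟩
  exact Complex.zero_le_real.mpr (h μ hμ)

theorem Matrix.dotProduct_mulVec_nonneg_of_normal {n : Type*} [Fintype n] [DecidableEq n]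
    {C : Matrix n n ℝ} (hC : C * Cᵀ = Cᵀ * C)
    (hspec : ∀ μ ∈ spectrum ℂ (C.map (algebraMap ℝ ℂ)), 0 ≤ μ.re) (w : n → ℝ) :
    0 ≤ w ⬝ᵥ C *ᵥ w := by
  set Cc := C.map (algebraMap ℝ ℂ)
  have hstar : star Cc = Cᵀ.map (algebraMap ℝ ℂ) := by
    ext i j; simp [Cc]
  have : IsStarNormal Cc := ⟨by
    rw [commute_iff_eq, hstar, ← Matrix.map_mul, ← Matrix.map_mul, hC]⟩
  have hquad (B : Matrix n n ℝ) : star (algebraMap ℝ ℂ ∘ w) ⬝ᵥ B.map (algebraMap ℝ ℂ) *ᵥ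
      (algebraMap ℝ ℂ ∘ w) = algebraMap ℝ ℂ (w ⬝ᵥ B *ᵥ w) := by
    simp [dotProduct, mulVec, Finset.mul_sum]
  have h := (posSemidef_realPart Cc hspec).dotProduct_mulVec_nonneg (algebraMap ℝ ℂ ∘ w)
  rw [realPart_apply_coe, hstar, smul_mulVec, add_mulVec, dotProduct_smul, dotProduct_add,
    hquad, hquad, dotProduct_mulVec w Cᵀ, vecMul_transpose, dotProduct_comm (C *ᵥ w), ← map_add,
    Algebra.smul_def, ← map_mul, Complex.coe_algebraMap, Complex.zero_le_real] at h
  linarith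

theorem Matrix.transpose_mulVec_eq_zero_of_normal {n R : Type*} [Fintype n] [CommRing R]
    [LinearOrder R] [IsStrictOrderedRing R] {A : Matrix n n R} (hA : A * Aᵀ = Aᵀ * A)
    {v : n → R} (hv : A *ᵥ v = 0) : Aᵀ *ᵥ v = 0 := by
  rw [← dotProduct_self_eq_zero]
  calc Aᵀ *ᵥ v ⬝ᵥ Aᵀ *ᵥ v = v ⬝ᵥ (A * Aᵀ) *ᵥ v := by
        rw [← mulVec_mulVec, dotProduct_mulVec v, ← mulVec_transpose]
    _ = 0 := by rw [hA, ← mulVec_mulVec, hv, mulVec_zero, dotProduct_zero]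

theorem Matrix.vecMul_eq_self_of_normal {n R : Type*} [Fintype n] [DecidableEq n] [CommRing R]
    [LinearOrder R] [IsStrictOrderedRing R] {C : Matrix n n R} (hC : C * Cᵀ = Cᵀ * C)
    {v : n → R} (hv : C *ᵥ v = v) : v ᵥ* C = v := by
  have hnormal : (C - 1) * (C - 1)ᵀ = (C - 1)ᵀ * (C - 1) := by
    simp only [transpose_sub, transpose_one, sub_mul, mul_sub, hC, one_mul, mul_one]
    abel
  have := transpose_mulVec_eq_zero_of_normal hnormal (by rw [sub_mulVec, hv, one_mulVec, sub_self])
  rwa [transpose_sub, transpose_one, sub_mulVec, one_mulVec, mulVec_transpose, sub_eq_zero] at this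

theorem MatrixIrreducible.forall_of_closed {N : ℕ} {M : Matrix (Fin N) (Fin N) ℝ}
    (hM : MatrixIrreducible M) {P : Fin N → Prop} (hP : ∀ i j, M i j ≠ 0 → P i → P j)
    {i₀ : Fin N} (h₀ : P i₀) (j : Fin N) : P j := by
  classical
  by_contra hj
  obtain ⟨i, hi, k, hk, hik⟩ := hM (Finset.univ.filter P) ⟨i₀, by simpa using h₀⟩
    fun h => hj (Finset.filter_eq_self.mp h j (Finset.mem_univ j))
  simp only [Finset.mem_filter, Finset.mem_univ, true_and] at hi hk
  exact hk (hP i k hik hi)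

theorem MatrixIrreducible.pos_of_nonneg {N : ℕ} {M : Matrix (Fin N) (Fin N) ℝ}
    (hM : MatrixIrreducible M) (hoff : ∀ i j, i ≠ j → 0 ≤ M i j) {x : Fin N → ℝ}
    (hx : ∀ i, 0 ≤ x i) (hx0 : x ≠ 0) (hMx : ∀ i, x i = 0 → (M *ᵥ x) i = 0) (i : Fin N) :
    0 < x i := by
  refine (hx i).lt_of_ne' fun hxi => hx0 <| funext fun j =>
    hM.forall_of_closed (P := fun j => x j = 0) (fun a b hab ha => ?_) hxi j
  have hterm (k : Fin N) : 0 ≤ M a k * x k := by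
    rcases eq_or_ne a k with rfl | hak
    · simp [ha]
    · exact mul_nonneg (hoff a k hak) (hx k)
  have hsum : ∑ k, M a k * x k = 0 := hMx a ha
  have := (Finset.sum_eq_zero_iff_of_nonneg fun k _ => hterm k).mp hsum b (Finset.mem_univ b)
  exact (mul_eq_zero.mp this).resolve_left hab

section LogBound

variable {n : Type*} {M : Matrix n n ℝ} {x : n → ℝ}

theorem Matrix.mul_div_sub_one_sub_log_nonneg (hoff : ∀ i j, i ≠ j → 0 ≤ M i j)
    (hx : ∀ i, 0 < x i) (i j : n) : 0 ≤ M i j * (x j / x i - 1 - Real.log (x j / x i)) := by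
  rcases eq_or_ne i j with rfl | hij
  · simp [div_self (hx i).ne']
  · exact mul_nonneg (hoff i j hij)
      (by linarith [Real.log_le_sub_one_of_pos (div_pos (hx j) (hx i))])

variable [Fintype n]

theorem Matrix.sum_mulVec_div_eq (hrow : ∀ i, ∑ j, M i j = 0) (hcol : ∀ j, ∑ i, M i j = 0)
    (hx : ∀ i, 0 < x i) :
    ∑ i, (M *ᵥ x) i / x i = ∑ i, ∑ j, M i j * (x j / x i - 1 - Real.log (x j / x i)) := by
  have hlog : ∑ i, ∑ j, M i j * (Real.log (x j) - Real.log (x i)) = 0 := by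
    simp only [mul_sub, Finset.sum_sub_distrib, ← Finset.sum_mul, hrow, zero_mul,
      sub_zero]
    rw [Finset.sum_comm]
    simp [← Finset.sum_mul, hcol]
  calc ∑ i, (M *ᵥ x) i / x i = ∑ i, ∑ j, M i j * (x j / x i) := by
        simp only [mulVec, dotProduct, Finset.sum_div, mul_div_assoc]
    _ = ∑ i, ∑ j, (M i j * (x j / x i - 1 - Real.log (x j / x i)) + M i j
          + M i j * (Real.log (x j) - Real.log (x i))) := by
        refine Finset.sum_congr rfl fun i _ => Finset.sum_congr rfl fun j _ => ?_
        rw [Real.log_div (hx j).ne' (hx i).ne']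
        ring
    _ = _ := by simp [Finset.sum_add_distrib, hrow, hlog]

theorem Matrix.sum_mulVec_div_nonneg (hoff : ∀ i j, i ≠ j → 0 ≤ M i j)
    (hrow : ∀ i, ∑ j, M i j = 0) (hcol : ∀ j, ∑ i, M i j = 0) (hx : ∀ i, 0 < x i) :
    0 ≤ ∑ i, (M *ᵥ x) i / x i := by
  rw [sum_mulVec_div_eq hrow hcol hx]
  exact Finset.sum_nonneg fun i _ => Finset.sum_nonneg fun j _ =>
    mul_div_sub_one_sub_log_nonneg hoff hx i j

theorem Matrix.eq_of_sum_mulVec_div_eq_zero (hoff : ∀ i j, i ≠ j → 0 ≤ M i j)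
    (hrow : ∀ i, ∑ j, M i j = 0) (hcol : ∀ j, ∑ i, M i j = 0) (hx : ∀ i, 0 < x i)
    (h0 : ∑ i, (M *ᵥ x) i / x i = 0) {i j : n} (hij : M i j ≠ 0) : x i = x j := by
  have hterm := mul_div_sub_one_sub_log_nonneg hoff hx
  rw [sum_mulVec_div_eq hrow hcol hx] at h0
  have hrow_zero := (Finset.sum_eq_zero_iff_of_nonneg fun i _ =>
    Finset.sum_nonneg fun j _ => hterm i j).mp h0 i (Finset.mem_univ i)
  have hij_zero := (Finset.sum_eq_zero_iff_of_nonneg fun j _ => hterm i j).mp hrow_zero j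
    (Finset.mem_univ j)
  have hlog := (mul_eq_zero.mp hij_zero).resolve_left hij
  by_contra hne
  have := Real.log_lt_sub_one_of_pos (div_pos (hx j) (hx i))
    fun h => hne ((div_eq_one_iff_eq (hx i).ne').mp h).symm
  linarith

end LogBound

theorem sum_mulVec_div_nonpos_of_mulVec_add_self_eq {n : Type*} [Fintype n]
    {M C : Matrix n n ℝ} {u : n → ℝ} (hM : 1 ᵥ* M = 0) (hC_row : C *ᵥ 1 = 1)
    (hC_col : 1 ᵥ* C = 1) (hC : ∀ w, 0 ≤ w ⬝ᵥ C *ᵥ w) (hu : ∀ i, u i ≠ 0)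
    (heq : ∀ i, (M *ᵥ u) i + u i = u i * (C *ᵥ u) i) :
    ∑ i, (M *ᵥ u) i / u i ≤ 0 := by
  have hdiv : ∑ i, (M *ᵥ u) i / u i = 1 ⬝ᵥ u - (1 : n → ℝ) ⬝ᵥ 1 := by
    calc ∑ i, (M *ᵥ u) i / u i = ∑ i, ((C *ᵥ u) i - 1) :=
          Finset.sum_congr rfl fun i _ => by rw [div_eq_iff (hu i)]; linarith [heq i]
      _ = 1 ⬝ᵥ u - 1 ⬝ᵥ 1 := by
          rw [Finset.sum_sub_distrib, ← one_dotProduct (C *ᵥ u), dotProduct_mulVec, hC_col,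
            one_dotProduct 1]
          rfl
  have hquad : u ⬝ᵥ C *ᵥ u = 1 ⬝ᵥ u := by
    calc u ⬝ᵥ C *ᵥ u = ∑ i, ((M *ᵥ u) i + u i) := Finset.sum_congr rfl fun i _ => (heq i).symm
      _ = 1 ⬝ᵥ u := by
          rw [Finset.sum_add_distrib, ← one_dotProduct (M *ᵥ u), dotProduct_mulVec, hM,
            zero_dotProduct, zero_add, one_dotProduct]
  have := hC (u - 1)
  rw [sub_dotProduct, mulVec_sub, dotProduct_sub, dotProduct_sub, hquad, hC_row,
    dotProduct_mulVec 1, hC_col, dotProduct_comm u 1] at this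
  linarith

theorem stmt6_general {N : ℕ}
    (M C : Matrix (Fin N) (Fin N) ℝ)
    -- (A1)
    (hM_offdiag : ∀ i j, i ≠ j → 0 ≤ M i j)
    (hM_irr : MatrixIrreducible M)
    (hM_lss : ∀ i, ∑ j, M i j = ∑ j, M j i)
    (hM_row : ∀ i, ∑ j, M i j = 0)
    -- (A2)
    (hC_normal : C * Cᵀ = Cᵀ * C)
    (hC_row : ∀ i, ∑ j, C i j = 1)
    -- (A3)
    (hC_spec : ∀ μ ∈ spectrum ℂ (C.map (algebraMap ℝ ℂ)), 0 ≤ μ.re)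
    (u : Fin N → ℝ) (hu_nonneg : ∀ i, 0 ≤ u i) (hu_ne : u ≠ 0)
    (hu_eq : ∀ i, M.mulVec u i + u i = u i * C.mulVec u i) :
    ∀ i, u i = 1 := by
  have hM_col : ∀ j, ∑ i, M i j = 0 := fun j => (hM_lss j).symm.trans (hM_row j)
  have hM_one : M *ᵥ 1 = 0 := funext fun i => by simpa [mulVec, dotProduct] using hM_row i
  have hM_vecMul : 1 ᵥ* M = 0 := funext fun j => by simpa [vecMul, dotProduct] using hM_col j
  have hC_one : C *ᵥ 1 = 1 := funext fun i => by simpa [mulVec, dotProduct] using hC_row i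
  have hu_pos : ∀ i, 0 < u i :=
    hM_irr.pos_of_nonneg hM_offdiag hu_nonneg hu_ne fun i hi => by simpa [hi] using hu_eq i
  have hdiv : ∑ i, (M *ᵥ u) i / u i = 0 :=
    le_antisymm
      (sum_mulVec_div_nonpos_of_mulVec_add_self_eq hM_vecMul hC_one
        (vecMul_eq_self_of_normal hC_normal hC_one)
        (dotProduct_mulVec_nonneg_of_normal hC_normal hC_spec) (fun i => (hu_pos i).ne') hu_eq)
      (sum_mulVec_div_nonneg hM_offdiag hM_row hM_col hu_pos)
  have hedge : ∀ a b, M a b ≠ 0 → u a = u b := fun _ _ =>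
    eq_of_sum_mulVec_div_eq_zero hM_offdiag hM_row hM_col hu_pos hdiv
  intro i
  have hconst : u = u i • 1 := funext fun j => by
    simpa using hM_irr.forall_of_closed (P := (u · = u i))
      (fun a b hab ha => (hedge a b hab).symm.trans ha) rfl j
  have h := hu_eq i
  rw [hconst, mulVec_smul, mulVec_smul, hM_one, hC_one] at h
  simp only [Pi.smul_apply, Pi.zero_apply, Pi.one_apply, smul_eq_mul, mul_zero, zero_add,
    mul_one] at h
  exact mul_left_cancel₀ (hu_pos i).ne' (h.symm.trans (mul_one (u i)).symm)

theorem stmt6 {N : ℕ} (hN : 2 ≤ N)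
    (M C : Matrix (Fin N) (Fin N) ℝ)
    -- (A1)
    (hM_offdiag : ∀ i j, i ≠ j → 0 ≤ M i j)
    (hM_irr : MatrixIrreducible M)
    (hM_lss : ∀ i, ∑ j, M i j = ∑ j, M j i)
    (hM_row : ∀ i, ∑ j, M i j = 0)
    -- (A2)
    (hC_pos : ∀ i j, 0 < C i j)
    (hC_normal : C * Cᵀ = Cᵀ * C)
    (hC_row : ∀ i, ∑ j, C i j = 1)
    -- (A3)
    (hC_spec : ∀ μ ∈ spectrum ℂ (C.map (algebraMap ℝ ℂ)), 0 ≤ μ.re)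
    (u : Fin N → ℝ) (hu_nonneg : ∀ i, 0 ≤ u i) (hu_ne : u ≠ 0)
    (hu_eq : ∀ i, M.mulVec u i + u i = u i * C.mulVec u i) :
    ∀ i, u i = 1 :=
  stmt6_general M C hM_offdiag hM_irr hM_lss hM_row hC_normal hC_row hC_spec u hu_nonneg hu_ne hu_eq
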